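/- Let (X,Y) be jointly distributed random variables on finite alphabets, fix a pair of values (x,y), write Δ_{xy} = P_{xy} − P_x·P_y and Δ̂_{xy} = P̂_{xy} − P̂_x·P̂_y, let N > 1 be an integer and δ ∈ (0,1). Then with probability at least 1−3δ over N i.i.d. samples of (X,Y), |Δ̂_{xy} − Δ_{xy}| ≤ 3·√(|Δ_{xy}|·log(2/δ)/N) + 9·√(P_x·P_y·log(2/δ)/N) + 39·log(2/δ)/N + 18·log²(2/δ)/N². -/

import Mathlib

open scoped BigOperators

noncomputable section

open Classical in
/-- Probability that `N` i.i.d. samples from the pmf `p` satisfy the event `E`. -/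
noncomputable def iidProb {α : Type*} [Fintype α] (p : α → ℝ) (N : ℕ)
    (E : (Fin N → α) → Prop) : ℝ :=
  ∑ s : Fin N → α, if E s then ∏ i, p (s i) else 0

open Classical in
/-- Empirical frequency (relative frequency) of the outcome `a` among the samples `s`. -/
noncomputable def empFreq {α : Type*} [Fintype α] {N : ℕ} (s : Fin N → α) (a : α) : ℝ :=
  ((Finset.univ.filter fun i => s i = a).card : ℝ) / N

/-- Marginal of the first coordinate of a joint pmf. -/
noncomputable def margFst {α β : Type*} [Fintype β] (p : α × β → ℝ) (x : α) : ℝ :=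
  ∑ y, p (x, y)

/-- Marginal of the second coordinate of a joint pmf. -/
noncomputable def margSnd {α β : Type*} [Fintype α] (p : α × β → ℝ) (y : β) : ℝ :=
  ∑ x, p (x, y)

/-- Mutual information `I(X;Y)` of a joint pmf on `α × β` (natural logarithm;
summands with zero probability vanish since `Real.log 0 = 0` and `x / 0 = 0`). -/
noncomputable def mutInfo {α β : Type*} [Fintype α] [Fintype β] (p : α × β → ℝ) : ℝ :=
  ∑ x, ∑ y, p (x, y) * Real.log (p (x, y) / (margFst p x * margSnd p y))

/-- Conditional mutual information `I(X;Y∣Z)` of a joint pmf on `α × β × γ`. -/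
noncomputable def condMutInfo {α β γ : Type*} [Fintype α] [Fintype β] [Fintype γ]
    (p : α × β × γ → ℝ) : ℝ :=
  ∑ x, ∑ y, ∑ z, p (x, y, z) *
    Real.log (p (x, y, z) * (∑ x', ∑ y', p (x', y', z)) /
      ((∑ y', p (x, y', z)) * (∑ x', p (x', y, z))))

/-!
Each of `P̂_{xy}`, `P̂_x`, `P̂_y` is the empirical frequency of an event, i.e. a sum of `N`
i.i.d. Bernoulli variables, so by the Chernoff bound it lies within the Bernstein radius
`2 √(q log(2/δ)/N) + 2 log(2/δ)/N` of its mean `q` except with probability `δ`. On the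
intersection of the three good events, writing `Δ̂ − Δ` as
`(P̂_{xy} − P_{xy}) − (P̂_x − P_x)(P̂_y − P_y) − P_x (P̂_y − P_y) − P_y (P̂_x − P_x)` and using
`√(P_{xy}) ≤ √|Δ_{xy}| + √(P_x P_y)` gives the bound deterministically.
-/

open Finset Real

section IidProb

variable {α : Type*} [Fintype α] {p : α → ℝ} {N : ℕ}

open Classical

theorem iidProb_eq_sum_filter (E : (Fin N → α) → Prop) :
    iidProb p N E = ∑ s with E s, ∏ i, p (s i) :=
  (sum_filter _ _).symm

theorem sum_prod_eq_one (hsum : ∑ a, p a = 1) : ∑ s : Fin N → α, ∏ i, p (s i) = 1 := by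
  rw [← Fintype.sum_pow, hsum, one_pow]

theorem iidProb_mono (hp : ∀ a, 0 ≤ p a) {E F : (Fin N → α) → Prop} (h : ∀ s, E s → F s) :
    iidProb p N E ≤ iidProb p N F := by
  simp only [iidProb_eq_sum_filter]
  exact sum_le_sum_of_subset_of_nonneg (monotone_filter_right _ fun s _ => h s)
    fun s _ _ => prod_nonneg fun i _ => hp _

theorem iidProb_or_le (hp : ∀ a, 0 ≤ p a) (E F : (Fin N → α) → Prop) :
    iidProb p N (fun s => E s ∨ F s) ≤ iidProb p N E + iidProb p N F := by
  rw [iidProb, iidProb, iidProb, ← sum_add_distrib]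
  refine sum_le_sum fun s _ => ?_
  have hw : 0 ≤ ∏ i, p (s i) := prod_nonneg fun i _ => hp _
  split_ifs <;> simp_all

theorem iidProb_not (hsum : ∑ a, p a = 1) (E : (Fin N → α) → Prop) :
    iidProb p N (fun s => ¬ E s) = 1 - iidProb p N E := by
  rw [eq_sub_iff_add_eq, iidProb, iidProb, ← sum_add_distrib, ← sum_prod_eq_one hsum]
  exact sum_congr rfl fun s _ => by by_cases h : E s <;> simp [h]

theorem one_sub_le_iidProb_of_forall_imp (hp : ∀ a, 0 ≤ p a) (hsum : ∑ a, p a = 1)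
    {E F G T : (Fin N → α) → Prop} (h : ∀ s, E s → F s → G s → T s) :
    1 - (iidProb p N (fun s => ¬ E s) + iidProb p N (fun s => ¬ F s) +
      iidProb p N (fun s => ¬ G s)) ≤ iidProb p N T := by
  have hbad : iidProb p N (fun s => ¬ T s) ≤
      iidProb p N (fun s => ¬ E s ∨ ¬ F s ∨ ¬ G s) :=
    iidProb_mono hp fun s hT => by by_contra! hEFG; exact hT (h s hEFG.1 hEFG.2.1 hEFG.2.2)
  have := iidProb_or_le hp (fun s => ¬ E s) (fun s => ¬ F s ∨ ¬ G s)
  have := iidProb_or_le hp (fun s => ¬ F s) (fun s => ¬ G s)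
  linarith [iidProb_not hsum T]

theorem iidProb_le_exp_neg_mul_sum (hp : ∀ a, 0 ≤ p a) (f : (Fin N → α) → ℝ) (c : ℝ) :
    iidProb p N (fun s => c ≤ f s) ≤ exp (-c) * ∑ s, (∏ i, p (s i)) * exp (f s) := by
  rw [iidProb, mul_sum]
  refine sum_le_sum fun s _ => ?_
  have hw : 0 ≤ ∏ i, p (s i) := prod_nonneg fun i _ => hp _
  split_ifs with h
  · calc ∏ i, p (s i) ≤ (∏ i, p (s i)) * exp (f s + -c) :=
          le_mul_of_one_le_right hw (one_le_exp (by linarith))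
      _ = exp (-c) * ((∏ i, p (s i)) * exp (f s)) := by rw [exp_add]; ring
  · positivity

theorem sum_prod_mul_exp_sum (g : α → ℝ) :
    ∑ s : Fin N → α, (∏ i, p (s i)) * exp (∑ i, g (s i)) = (∑ a, p a * exp (g a)) ^ N := by
  simp only [Fintype.sum_pow, exp_sum, prod_mul_distrib]

end IidProb

section Chernoff

variable {α : Type*} [Fintype α]

open Classical

def eventProb (p : α → ℝ) (Q : α → Prop) : ℝ := ∑ a with Q a, p a

def sampleCount {N : ℕ} (Q : α → Prop) (s : Fin N → α) : ℕ := #{i | Q (s i)}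

/-- The radius `2 √(q r) + 2 r` of Bernstein's inequality for a frequency with mean `q`,
at confidence level `r = log (2 / δ) / N`. -/
def bernsteinRadius (q r : ℝ) : ℝ := 2 * √(q * r) + 2 * r

variable {p : α → ℝ} {N : ℕ}

theorem eventProb_empFreq (s : Fin N → α) (Q : α → Prop) :
    eventProb (empFreq s) Q = sampleCount Q s / N := by
  rw [eventProb, sampleCount, card_eq_sum_card_fiberwise (f := s) (t := {a | Q a})
    fun i hi => by simpa using hi, Nat.cast_sum, sum_div]
  refine sum_congr rfl fun a ha => ?_
  rw [empFreq, filter_filter]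
  congr 3
  ext i
  simp only [mem_filter, mem_univ, true_and] at ha ⊢
  exact (and_iff_right_of_imp fun h => h ▸ ha).symm

theorem apply_eq_eventProb (q : α → ℝ) (a : α) :
    q a = eventProb q (· = a) := by
  rw [eventProb, filter_eq' univ a, if_pos (mem_univ a), sum_singleton]

theorem eventProb_nonneg (hp : ∀ a, 0 ≤ p a) (Q : α → Prop) : 0 ≤ eventProb p Q :=
  sum_nonneg fun a _ => hp a

theorem eventProb_le_one (hp : ∀ a, 0 ≤ p a) (hsum : ∑ a, p a = 1) (Q : α → Prop) :
    eventProb p Q ≤ 1 :=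
  hsum ▸ sum_le_sum_of_subset_of_nonneg (filter_subset _ _) fun a _ _ => hp a

theorem sum_mul_exp_mul_ite (hsum : ∑ a, p a = 1) (Q : α → Prop) (u : ℝ) :
    ∑ a, p a * exp (u * if Q a then 1 else 0) = 1 + eventProb p Q * (exp u - 1) := by
  have h a : p a * exp (u * if Q a then 1 else 0) =
      p a + (if Q a then p a else 0) * (exp u - 1) := by
    split_ifs <;> simp [mul_sub]
  rw [sum_congr rfl fun a _ => h a, sum_add_distrib, hsum, ← sum_mul, ← sum_filter, eventProb]

theorem sum_prod_mul_exp_mul_sampleCount_le (hp : ∀ a, 0 ≤ p a) (hsum : ∑ a, p a = 1)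
    (Q : α → Prop) (u : ℝ) :
    ∑ s : Fin N → α, (∏ i, p (s i)) * exp (u * sampleCount Q s) ≤
      exp (N * (eventProb p Q * (exp u - 1))) := by
  have hcount (s : Fin N → α) : u * sampleCount Q s = ∑ i, u * if Q (s i) then 1 else 0 := by
    simp only [sampleCount, card_filter, Nat.cast_sum, Nat.cast_ite, Nat.cast_one, Nat.cast_zero,
      mul_sum]
  simp only [hcount]
  rw [sum_prod_mul_exp_sum (fun a => u * if Q a then 1 else 0), sum_mul_exp_mul_ite hsum,
    exp_nat_mul]
  have hq0 := eventProb_nonneg hp Q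
  have hq1 := eventProb_le_one hp hsum Q
  refine pow_le_pow_left₀ ?_ (by linarith [add_one_le_exp (eventProb p Q * (exp u - 1))]) N
  nlinarith [exp_pos u]

theorem iidProb_le_mul_sampleCount_sub_le (hp : ∀ a, 0 ≤ p a) (hsum : ∑ a, p a = 1)
    (Q : α → Prop) {σ t ε : ℝ} (hσ : |σ| = 1) (ht0 : 0 ≤ t) (ht1 : t ≤ 1) :
    iidProb p N (fun s => N * ε ≤ σ * (sampleCount Q s - N * eventProb p Q)) ≤
      exp (N * (eventProb p Q * t ^ 2 - t * ε)) := by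
  -- `σ = ±1` selects the tail; the exponential moment is taken at `u = σ t`.
  set q := eventProb p Q
  set u := σ * t
  have hu : |u| ≤ 1 := by rwa [abs_mul, hσ, one_mul, abs_of_nonneg ht0]
  have hu2 : u ^ 2 = t ^ 2 := by rw [← sq_abs u, abs_mul, hσ, one_mul, abs_of_nonneg ht0]
  have hexp : exp u - 1 ≤ u + u ^ 2 := by linarith [(abs_le.1 (abs_exp_sub_one_sub_id_le hu)).2]
  calc iidProb p N (fun s => N * ε ≤ σ * (sampleCount Q s - N * q))
      ≤ iidProb p N (fun s => t * N * ε + u * N * q ≤ u * sampleCount Q s) :=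
        iidProb_mono hp fun s h => by nlinarith [mul_le_mul_of_nonneg_left h ht0]
    _ ≤ exp (-(t * N * ε + u * N * q)) * exp (N * (q * (exp u - 1))) :=
        (iidProb_le_exp_neg_mul_sum hp _ _).trans <| mul_le_mul_of_nonneg_left
          (sum_prod_mul_exp_mul_sampleCount_le hp hsum Q u) (exp_pos _).le
    _ ≤ exp (N * (q * t ^ 2 - t * ε)) := by
        rw [← exp_add, exp_le_exp, ← hu2]
        have hN : (0 : ℝ) ≤ N := N.cast_nonneg
        have hq : 0 ≤ q := eventProb_nonneg hp Q
        nlinarith [mul_le_mul_of_nonneg_left hexp (mul_nonneg hN hq)]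

theorem exists_mul_sq_sub_mul_bernsteinRadius_le {q r : ℝ} (hr : 0 ≤ r) :
    ∃ t, 0 ≤ t ∧ t ≤ 1 ∧ q * t ^ 2 - t * bernsteinRadius q r ≤ -r := by
  rcases le_or_gt q r with hqr | hrq
  · refine ⟨1, zero_le_one, le_rfl, ?_⟩
    have := sqrt_nonneg (q * r)
    unfold bernsteinRadius
    linarith
  · -- `t = √(r / q)` makes both `q t²` and `t √(q r)` equal to `r`.
    have hq0 : 0 < q := hr.trans_lt hrq
    refine ⟨√(r / q), sqrt_nonneg _, sqrt_le_one.mpr ((div_le_one hq0).2 hrq.le), ?_⟩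
    have hsq : q * √(r / q) ^ 2 = r := by rw [sq_sqrt (div_nonneg hr hq0.le)]; field_simp
    have hcross : √(r / q) * √(q * r) = r := by
      rw [← sqrt_mul (div_nonneg hr hq0.le), show r / q * (q * r) = r ^ 2 by field_simp, sqrt_sq hr]
    have := mul_nonneg (sqrt_nonneg (r / q)) hr
    unfold bernsteinRadius
    nlinarith

theorem iidProb_not_abs_sub_le_bernsteinRadius_le (hp : ∀ a, 0 ≤ p a) (hsum : ∑ a, p a = 1)
    (Q : α → Prop) (hN : 0 < N) {r : ℝ} (hr : 0 ≤ r) :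
    iidProb p N (fun s => ¬ |eventProb (empFreq s) Q - eventProb p Q| ≤
      bernsteinRadius (eventProb p Q) r) ≤ 2 * exp (-(N * r)) := by
  simp only [eventProb_empFreq]
  set q := eventProb p Q
  set ε := bernsteinRadius q r
  have hNr : (0 : ℝ) < N := Nat.cast_pos.2 hN
  obtain ⟨t, ht0, ht1, ht⟩ := exists_mul_sq_sub_mul_bernsteinRadius_le (q := q) hr
  have htail {σ : ℝ} (hσ : |σ| = 1) :
      iidProb p N (fun s => N * ε ≤ σ * (sampleCount Q s - N * q)) ≤ exp (-(N * r)) :=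
    (iidProb_le_mul_sampleCount_sub_le hp hsum Q hσ ht0 ht1).trans
      (exp_le_exp.2 (by nlinarith))
  have hsplit (s : Fin N → α) (h : ¬ |sampleCount Q s / N - q| ≤ ε) :
      N * ε ≤ 1 * (sampleCount Q s - N * q) ∨ N * ε ≤ -1 * (sampleCount Q s - N * q) := by
    rw [not_le, show (sampleCount Q s : ℝ) / N - q = (sampleCount Q s - N * q) / N by
      field_simp, abs_div, abs_of_pos hNr, lt_div_iff₀ hNr, lt_abs, mul_comm] at h
    rcases h with h | h
    · exact .inl (by linarith)
    · exact .inr (by linarith)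
  calc _ ≤ _ := iidProb_mono hp hsplit
    _ ≤ _ := iidProb_or_le hp _ _
    _ ≤ exp (-(N * r)) + exp (-(N * r)) := add_le_add (htail (by simp)) (htail (by simp))
    _ = 2 * exp (-(N * r)) := by ring

end Chernoff

section Marginals

open Classical

variable {A B : Type*} [Fintype A] [Fintype B]

theorem margFst_eq_eventProb (q : A × B → ℝ) (x : A) :
    margFst q x = eventProb q (·.1 = x) := by
  rw [eventProb, sum_filter, Fintype.sum_prod_type,
    sum_eq_single x (fun b _ hb => by simp [hb]) (by simp)]
  simp [margFst]

theorem margSnd_eq_eventProb (q : A × B → ℝ) (y : B) :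
    margSnd q y = eventProb q (·.2 = y) := by
  rw [eventProb, sum_filter, Fintype.sum_prod_type_right,
    sum_eq_single y (fun b _ hb => by simp [hb]) (by simp)]
  simp [margSnd]

end Marginals

section Perturbation

theorem sqrt_add_le_sqrt_add_sqrt {x y : ℝ} (hx : 0 ≤ x) (hy : 0 ≤ y) : √(x + y) ≤ √x + √y := by
  rw [sqrt_le_left (by positivity)]
  nlinarith [sq_sqrt hx, sq_sqrt hy, mul_nonneg (sqrt_nonneg x) (sqrt_nonneg y)]

theorem abs_sub_mul_sub_sub_mul_le {a b c a' b' c' : ℝ} (hb : 0 ≤ b) (hc : 0 ≤ c) :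
    |(a' - b' * c') - (a - b * c)| ≤
      |a' - a| + |b' - b| * |c' - c| + b * |c' - c| + c * |b' - b| := by
  calc |(a' - b' * c') - (a - b * c)|
      = |(a' - a) - ((b' - b) * (c' - c) + b * (c' - c) + c * (b' - b))| := by ring_nf
    _ ≤ |a' - a| + (|(b' - b) * (c' - c)| + |b * (c' - c)| + |c * (b' - b)|) :=
        (abs_sub _ _).trans (by gcongr; exact abs_add_three _ _ _)
    _ = _ := by rw [abs_mul, abs_mul, abs_mul, abs_of_nonneg hb, abs_of_nonneg hc]; ring

variable {r : ℝ}

theorem bernsteinRadius_le_of_le_one {q : ℝ} (hq : q ≤ 1) (hr : 0 ≤ r) :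
    bernsteinRadius q r ≤ 2 * √r + 2 * r := by
  unfold bernsteinRadius
  gcongr
  nlinarith

theorem mul_bernsteinRadius_le {b c : ℝ} (hb0 : 0 ≤ b) (hb1 : b ≤ 1) (hc : 0 ≤ c) (hr : 0 ≤ r) :
    b * bernsteinRadius c r ≤ bernsteinRadius (b * c) r := by
  have hsqrt : b * √(c * r) ≤ √(b * c * r) := by
    rw [← sqrt_sq hb0, ← sqrt_mul (sq_nonneg b), sqrt_sq hb0]
    have := mul_nonneg (mul_nonneg hb0 (sub_nonneg.2 hb1)) (mul_nonneg hc hr)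
    exact sqrt_le_sqrt (by nlinarith)
  unfold bernsteinRadius
  nlinarith

theorem bernsteinRadius_mul_bernsteinRadius_le {b c : ℝ} (hb : b ≤ 1) (hc : c ≤ 1) (hr : 0 ≤ r) :
    bernsteinRadius b r * bernsteinRadius c r ≤ 8 * r + 8 * r ^ 2 := by
  have hb0 : 0 ≤ bernsteinRadius b r := by unfold bernsteinRadius; positivity
  have hc0 : 0 ≤ bernsteinRadius c r := by unfold bernsteinRadius; positivity
  calc bernsteinRadius b r * bernsteinRadius c r ≤ (2 * √r + 2 * r) ^ 2 := by
        rw [sq]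
        exact mul_le_mul (bernsteinRadius_le_of_le_one hb hr)
          (bernsteinRadius_le_of_le_one hc hr) hc0 (hb0.trans (bernsteinRadius_le_of_le_one hb hr))
    _ ≤ 2 * ((2 * √r) ^ 2 + (2 * r) ^ 2) := add_sq_le
    _ = 8 * r + 8 * r ^ 2 := by rw [mul_pow, sq_sqrt hr]; ring

theorem sqrt_mul_le_sqrt_abs_sub_mul_add {a d r : ℝ} (hd : 0 ≤ d) (hr : 0 ≤ r) :
    √(a * r) ≤ √(|a - d| * r) + √(d * r) := by
  calc √(a * r) ≤ √(|a - d| * r + d * r) :=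
        sqrt_le_sqrt (by nlinarith [le_abs_self (a - d)])
    _ ≤ _ := sqrt_add_le_sqrt_add_sqrt (by positivity) (by positivity)

/-- The argument gives the constants `2, 6, 14, 8`; the weaker ones of the theorem are stated. -/
theorem abs_sub_mul_sub_sub_mul_le_of_bernsteinRadius {a b c a' b' c' : ℝ} (hb0 : 0 ≤ b)
    (hb1 : b ≤ 1) (hc0 : 0 ≤ c) (hc1 : c ≤ 1) (hr : 0 ≤ r)
    (ha' : |a' - a| ≤ bernsteinRadius a r) (hb' : |b' - b| ≤ bernsteinRadius b r)
    (hc' : |c' - c| ≤ bernsteinRadius c r) :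
    |(a' - b' * c') - (a - b * c)| ≤
      3 * √(|a - b * c| * r) + 9 * √(b * c * r) + 39 * r + 18 * r ^ 2 := by
  have hprod := (mul_le_mul hb' hc' (abs_nonneg _) (by unfold bernsteinRadius; positivity)).trans
    (bernsteinRadius_mul_bernsteinRadius_le hb1 hc1 hr)
  have hbc := (mul_le_mul_of_nonneg_left hc' hb0).trans (mul_bernsteinRadius_le hb0 hb1 hc0 hr)
  have hcb := (mul_le_mul_of_nonneg_left hb' hc0).trans
    (mul_bernsteinRadius_le hc0 hc1 hb0 hr)
  have ha := sqrt_mul_le_sqrt_abs_sub_mul_add (a := a) (mul_nonneg hb0 hc0) hr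
  rw [mul_comm c b] at hcb
  unfold bernsteinRadius at *
  have hdecomp := abs_sub_mul_sub_sub_mul_le (a := a) (a' := a') (b' := b') (c' := c') hb0 hc0
  linarith [sqrt_nonneg (|a - b * c| * r), sqrt_nonneg (b * c * r), sq_nonneg r]

end Perturbation

/-- With probability at least `1 − 3δ`,
`|Δ̂_{xy} − Δ_{xy}| ≤ 3√(|Δ_{xy}| log(2/δ)/N) + 9√(P_x P_y log(2/δ)/N)
  + 39 log(2/δ)/N + 18 log²(2/δ)/N²`. -/
theorem empirical_delta_concentration {A B : Type*} [Fintype A] [Fintype B]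
    (p : A × B → ℝ) (hp : ∀ w, 0 ≤ p w) (hsum : (∑ w, p w) = 1)
    (x : A) (y : B) (N : ℕ) (hN : 1 < N) (δ : ℝ) (hδ0 : 0 < δ) (hδ1 : δ < 1) :
    1 - 3 * δ ≤ iidProb p N (fun s =>
      |(empFreq s (x, y) - margFst (empFreq s) x * margSnd (empFreq s) y) -
          (p (x, y) - margFst p x * margSnd p y)| ≤
        3 * Real.sqrt (|p (x, y) - margFst p x * margSnd p y| * Real.log (2 / δ) / N) +
          9 * Real.sqrt (margFst p x * margSnd p y * Real.log (2 / δ) / N) +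
          39 * Real.log (2 / δ) / N +
          18 * Real.log (2 / δ) ^ 2 / (N : ℝ) ^ 2) := by
  have hNpos : (0 : ℝ) < N := by exact_mod_cast (by omega : 0 < N)
  have hL : 0 ≤ Real.log (2 / δ) := Real.log_nonneg (by rw [le_div_iff₀ hδ0]; linarith)
  set r := Real.log (2 / δ) / N
  have hr : 0 ≤ r := by positivity
  let Good (Q : A × B → Prop) (s : Fin N → A × B) : Prop :=
    |eventProb (empFreq s) Q - eventProb p Q| ≤ bernsteinRadius (eventProb p Q) r
  have hbad (Q : A × B → Prop) : iidProb p N (fun s => ¬ Good Q s) ≤ δ := by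
    refine (iidProb_not_abs_sub_le_bernsteinRadius_le hp hsum Q (by omega) hr).trans_eq ?_
    rw [mul_div_cancel₀ _ hNpos.ne', exp_neg, exp_log (by positivity)]
    field_simp
  refine le_trans ?_ (one_sub_le_iidProb_of_forall_imp hp hsum (E := Good (· = (x, y)))
    (F := Good (·.1 = x)) (G := Good (·.2 = y)) fun s h1 h2 h3 => ?_)
  · linarith [hbad (· = (x, y)), hbad (·.1 = x), hbad (·.2 = y)]
  simp only [Good, ← apply_eq_eventProb, ← margFst_eq_eventProb, ← margSnd_eq_eventProb] at h1 h2 h3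
  simp only [mul_div_assoc, ← div_pow]
  have hPx := margFst_eq_eventProb p x
  have hPy := margSnd_eq_eventProb p y
  exact abs_sub_mul_sub_sub_mul_le_of_bernsteinRadius (hPx ▸ eventProb_nonneg hp _)
    (hPx ▸ eventProb_le_one hp hsum _) (hPy ▸ eventProb_nonneg hp _)
    (hPy ▸ eventProb_le_one hp hsum _) hr h1 h2 h3
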